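/- Let C be a set of pairwise weakly separated nonempty circular pairs on n boundary vertices, let E = ⋃_{(P;Q)∈C} E(P;Q), and let {a,b} ∈ E be an edge such that for every other edge {c,d} ∈ E, the vertices c and d do not both lie on the arc drawn from a clockwise to b (inclusive of endpoints). For a circular pair (P;Q), let J(P;Q) be the circular pair with connection set E(P;Q)∖{{a,b}}. Then there is at most one (P;Q) ∈ C such that {a,b} ∈ E(P;Q) and J(P;Q) ∈ C. -/

import Mathlib

namespace CircularPlanar

/-- A "pre-pair": an ordered pair of lists of boundary vertices.  The boundary
vertices are labeled by `Fin n`, where `i : Fin n` represents the vertex with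
label `i+1`, and the labels `1, …, n` occur in clockwise order. -/
abbrev PrePair (n : ℕ) := List (Fin n) × List (Fin n)

/-- The identification `(P;Q) ↦ (Q̃;P̃)`. -/
def cpFlip {n : ℕ} (pq : PrePair n) : PrePair n := (pq.2.reverse, pq.1.reverse)

/-- A list of boundary vertices occurs in clockwise cyclic order if some
rotation of it is strictly increasing. -/
def ClockwiseCyclic {n : ℕ} (l : List (Fin n)) : Prop :=
  ∃ k : ℕ, List.Chain' (· < ·) (l.rotate k)

/-- `(P;Q)` is a circular pair if `P`, `Q` are disjoint tuples of boundary
vertices of equal length, and `p_1, …, p_k, q_k, …, q_1` is in clockwise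
cyclic order. -/
def IsCircularPair {n : ℕ} (pq : PrePair n) : Prop :=
  pq.1.length = pq.2.length ∧ pq.1.Nodup ∧ pq.2.Nodup ∧
    (∀ x ∈ pq.1, x ∉ pq.2) ∧ ClockwiseCyclic (pq.1 ++ pq.2.reverse)

/-- Two subsets `A, B ⊆ {1,…,n}` are weakly separated. -/
def WeakSepSets {n : ℕ} (A B : Finset (Fin n)) : Prop :=
  ¬ ∃ a a' b b' : Fin n, a ∈ A \ B ∧ a' ∈ A \ B ∧ b ∈ B \ A ∧ b' ∈ B \ A ∧
      ((a < b ∧ b < a' ∧ a' < b') ∨ (b < a ∧ a < b' ∧ b' < a'))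

/-- Two circular pairs `(P;Q)`, `(R;S)` are weakly separated. -/
def WeakSepCP {n : ℕ} (pq rs : PrePair n) : Prop :=
  WeakSepSets (pq.1.toFinset ∪ rs.1.toFinset) (pq.2.toFinset ∪ rs.2.toFinset) ∧
  WeakSepSets (pq.1.toFinset ∪ rs.2.toFinset) (pq.2.toFinset ∪ rs.1.toFinset)

/-- The set of connections `E(P;Q) = {{p_i, q_i}}` of a circular pair. -/
def connFinset {n : ℕ} (pq : PrePair n) : Finset (Sym2 (Fin n)) :=
  ((pq.1.zip pq.2).map fun ab => Sym2.mk ab.1 ab.2).toFinset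

/-- `x` lies on the arc drawn from `a` clockwise to `b`, inclusive. -/
def OnArc {n : ℕ} (a b x : Fin n) : Prop :=
  (x.val + n - a.val) % n ≤ (b.val + n - a.val) % n

/-- `Jop a b pq` removes the connection `{a,b}` from the circular pair `pq`
(if present): it is the circular pair with connection set `E(P;Q) ∖ {{a,b}}`. -/
def Jop {n : ℕ} (a b : Fin n) (pq : PrePair n) : PrePair n :=
  ((((pq.1.zip pq.2).filter fun x => decide (Sym2.mk x.1 x.2 ≠ Sym2.mk a b)).map Prod.fst),
   (((pq.1.zip pq.2).filter fun x => decide (Sym2.mk x.1 x.2 ≠ Sym2.mk a b)).map Prod.snd))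

/-! ## Solid and diametric circular pairs -/

/-- Membership in a set of pre-pairs, up to the identification `(P;Q)=(Q̃;P̃)`. -/
def MemId {n : ℕ} (pq : PrePair n) (C : Set (PrePair n)) : Prop :=
  pq ∈ C ∨ cpFlip pq ∈ C

/-- circular coordinate based at `b0` -/
def cval {n : ℕ} (b0 z : Fin n) : ℕ := (z.val + n - b0.val) % n

lemma cval_eq {n : ℕ} (b0 z : Fin n) :
    cval b0 z = if b0.val ≤ z.val then z.val - b0.val else z.val + n - b0.val := by
  have hb := b0.isLt; have hz := z.isLt
  unfold cval
  split_ifs with h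
  · have e : z.val + n - b0.val = (z.val - b0.val) + n := by omega
    rw [e, Nat.add_mod_right]
    exact Nat.mod_eq_of_lt (by omega)
  · exact Nat.mod_eq_of_lt (by omega)

/-- the relation "strictly earlier in clockwise order starting at b0" -/
def cb {n : ℕ} (b0 : Fin n) (x y : Fin n) : Prop := cval b0 x < cval b0 y

lemma cval_inj {n : ℕ} {b0 x y : Fin n} (h : cval b0 x = cval b0 y) : x = y := by
  have hb := b0.isLt; have hx := x.isLt; have hy := y.isLt
  rw [cval_eq, cval_eq] at h
  apply Fin.ext
  split_ifs at h <;> omega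

lemma four_rot {n : ℕ} {b x y a : Fin n} (h1 : cval b b < cval b x)
    (h2 : cval b x < cval b y) (h3 : cval b y < cval b a) :
    (b < x ∧ x < y ∧ y < a) ∨ (x < y ∧ y < a ∧ a < b) ∨
    (y < a ∧ a < b ∧ b < x) ∨ (a < b ∧ b < x ∧ x < y) := by
  have hb := b.isLt; have hx := x.isLt; have hy := y.isLt; have ha := a.isLt
  simp only [cval_eq] at h1 h2 h3
  simp only [Fin.lt_def]
  split_ifs at h1 h2 h3 <;> omega

lemma WeakSepSets.symm {n : ℕ} {A B : Finset (Fin n)} (h : WeakSepSets A B) :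
    WeakSepSets B A := by
  intro ⟨a, a', b, b', ha, ha', hb, hb', hor⟩
  exact h ⟨b, b', a, a', hb, hb', ha, ha', hor.symm⟩

lemma ws_contra {n : ℕ} {A B : Finset (Fin n)} {x y a b : Fin n} (hws : WeakSepSets A B)
    (hxA : x ∈ A) (hxB : x ∉ B) (hyB : y ∈ B) (hyA : y ∉ A)
    (haA : a ∈ A) (haB : a ∉ B) (hbB : b ∈ B) (hbA : b ∉ A)
    (h1 : cval b b < cval b x) (h2 : cval b x < cval b y) (h3 : cval b y < cval b a) :
    False := by
  apply hws
  have hxA' : x ∈ A \ B := Finset.mem_sdiff.mpr ⟨hxA, hxB⟩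
  have haA' : a ∈ A \ B := Finset.mem_sdiff.mpr ⟨haA, haB⟩
  have hyB' : y ∈ B \ A := Finset.mem_sdiff.mpr ⟨hyB, hyA⟩
  have hbB' : b ∈ B \ A := Finset.mem_sdiff.mpr ⟨hbB, hbA⟩
  rcases four_rot h1 h2 h3 with ⟨u1, u2, u3⟩ | ⟨u1, u2, u3⟩ | ⟨u1, u2, u3⟩ | ⟨u1, u2, u3⟩
  · exact ⟨x, a, b, y, hxA', haA', hbB', hyB', Or.inr ⟨u1, u2, u3⟩⟩
  · exact ⟨x, a, y, b, hxA', haA', hyB', hbB', Or.inl ⟨u1, u2, u3⟩⟩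
  · exact ⟨a, x, y, b, haA', hxA', hyB', hbB', Or.inr ⟨u1, u2, u3⟩⟩
  · exact ⟨a, x, b, y, haA', hxA', hbB', hyB', Or.inl ⟨u1, u2, u3⟩⟩

lemma cpFlip_cpFlip {n : ℕ} (pq : PrePair n) : cpFlip (cpFlip pq) = pq := by
  simp [cpFlip]

lemma ClockwiseCyclic.rotate {n : ℕ} {l : List (Fin n)} (h : ClockwiseCyclic l) (m : ℕ) :
    ClockwiseCyclic (l.rotate m) := by
  obtain ⟨r, hr⟩ := h
  rcases Nat.eq_zero_or_pos l.length with hl | hl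
  · rw [List.length_eq_zero_iff] at hl
    subst hl
    exact ⟨r, by simpa using hr⟩
  · refine ⟨r + (l.length - m % l.length), ?_⟩
    rw [List.rotate_rotate]
    have : (m + (r + (l.length - m % l.length))) % l.length = r % l.length := by
      have h1 : m % l.length ≤ m := Nat.mod_le _ _
      have h2 : m % l.length < l.length := Nat.mod_lt _ hl
      have e : m + (r + (l.length - m % l.length)) =
          (r + (m - m % l.length)) + l.length := by omega
      rw [e, Nat.add_mod_right]
      have : m - m % l.length = l.length * (m / l.length) := by
        have := Nat.div_add_mod m l.length; omega
      rw [this, Nat.add_mul_mod_self_left]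
    rw [← List.rotate_mod, this, List.rotate_mod]
    exact hr


lemma sorted_rot_pairwise {n : ℕ} (xs ys' : List (Fin n)) (b0 : Fin n)
    (h : List.Chain' (· < ·) (xs ++ b0 :: ys')) :
    List.Pairwise (cb b0) ((b0 :: ys') ++ xs) := by
  have hp : List.Pairwise (· < ·) (xs ++ b0 :: ys') := List.isChain_iff_pairwise.mp h
  rw [List.pairwise_append] at hp
  obtain ⟨pxs, pys, cross⟩ := hp
  rw [List.pairwise_cons] at pys
  obtain ⟨hb0, pys'⟩ := pys
  have hxlt : ∀ x ∈ xs, x < b0 := fun x hx => cross x hx b0 (List.mem_cons_self)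
  have hble : ∀ y ∈ b0 :: ys', b0 ≤ y := by
    intro y hy
    rcases List.mem_cons.mp hy with rfl | hy
    · exact le_refl _
    · exact le_of_lt (hb0 y hy)
  rw [List.pairwise_append]
  refine ⟨?_, ?_, ?_⟩
  · have hpc : List.Pairwise (· < ·) (b0 :: ys') := List.pairwise_cons.mpr ⟨hb0, pys'⟩
    refine hpc.imp_of_mem ?_
    intro u v hu hv huv
    have h1 : b0.val ≤ u.val := hble u hu
    have hun := u.isLt; have hvn := v.isLt
    have h3 : u.val < v.val := huv
    simp only [cb, cval_eq]
    split_ifs <;> omega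
  · refine pxs.imp_of_mem ?_
    intro u v hu hv huv
    have h1 : u.val < b0.val := hxlt u hu
    have h2 : v.val < b0.val := hxlt v hv
    have hun := u.isLt; have hvn := v.isLt; have hb := b0.isLt
    have h3 : u.val < v.val := huv
    simp only [cb, cval_eq]
    split_ifs <;> omega
  · intro u hu v hv
    have h1 : b0.val ≤ u.val := hble u hu
    have h2 : v.val < b0.val := hxlt v hv
    have hun := u.isLt; have hvn := v.isLt; have hb := b0.isLt
    simp only [cb, cval_eq]
    split_ifs <;> omega

lemma rot_cb {n : ℕ} {l : List (Fin n)} (h : ClockwiseCyclic l) (m : ℕ)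
    {b0 : Fin n} {rest : List (Fin n)} (hT : l.rotate m = b0 :: rest) :
    List.Pairwise (cb b0) (l.rotate m) := by
  obtain ⟨r, hr⟩ := h.rotate m
  set T := l.rotate m with hTdef
  have hlen : 0 < T.length := by rw [hT]; simp
  have hr' : List.Chain' (· < ·) (T.rotate (r % T.length)) := by
    rw [List.rotate_mod]; exact hr
  set r' := r % T.length with hr'def
  have hr'lt : r' < T.length := Nat.mod_lt _ hlen
  have hM : T.rotate r' = T.drop r' ++ T.take r' :=
    List.rotate_eq_drop_append_take (le_of_lt hr'lt)
  rcases Nat.eq_zero_or_pos r' with hz | hpos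
  · rw [hz, List.rotate_zero] at hr'
    have := sorted_rot_pairwise [] rest b0 (by simpa [hT] using hr')
    simpa [hT] using this
  · obtain ⟨r'', hr''⟩ := Nat.exists_eq_succ_of_ne_zero (Nat.pos_iff_ne_zero.mp hpos)
    have htake : T.take r' = b0 :: rest.take r'' := by
      rw [hT, hr'', List.take_succ_cons]
    have hsorted : List.Chain' (· < ·) (T.drop r' ++ (b0 :: rest.take r'')) := by
      rw [← htake, ← hM]; exact hr'
    have hpw := sorted_rot_pairwise (T.drop r') (rest.take r'') b0 hsorted
    have : (b0 :: rest.take r'') ++ T.drop r' = T := by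
      rw [← htake, List.take_append_drop]
    rwa [this] at hpw

lemma geomX {n : ℕ} {P Q : List (Fin n)} {a b : Fin n}
    (h : ClockwiseCyclic ((P ++ [a]) ++ (Q ++ [b]).reverse)) :
    List.Pairwise (cb b) (b :: (Q.reverse ++ (P ++ [a]))) := by
  have e2 : ((P ++ [a]) ++ (Q ++ [b]).reverse).rotate (P ++ [a]).length
      = b :: (Q.reverse ++ (P ++ [a])) := by
    rw [List.rotate_eq_drop_append_take (by simp)]
    rw [List.drop_left, List.take_left]
    simp
  have := rot_cb h (P ++ [a]).length e2
  rwa [e2] at this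

lemma IsCircularPair.flip {n : ℕ} {pq : PrePair n} (h : IsCircularPair pq) :
    IsCircularPair (cpFlip pq) := by
  obtain ⟨hlen, h1, h2, hd, hc⟩ := h
  refine ⟨by simp [cpFlip, hlen], by simp [cpFlip, h2], by simp [cpFlip, h1], ?_, ?_⟩
  · intro x hx hx2
    simp only [cpFlip, List.mem_reverse] at hx hx2
    exact hd x hx2 hx
  · have e : (cpFlip pq).1 ++ (cpFlip pq).2.reverse
        = (pq.1 ++ pq.2.reverse).rotate pq.1.length := by
      rw [List.rotate_eq_drop_append_take (by simp)]
      rw [List.drop_left, List.take_left]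
      simp [cpFlip]
    rw [e]
    exact hc.rotate _

lemma list_eq_of_cb {n : ℕ} (b : Fin n) {l1 l2 : List (Fin n)} (h1 : l1.Nodup) (h2 : l2.Nodup)
    (hf : l1.toFinset = l2.toFinset) (s1 : List.Pairwise (cb b) l1)
    (s2 : List.Pairwise (cb b) l2) : l1 = l2 := by
  haveI : IsAntisymm (Fin n) (cb b) :=
    ⟨fun u v h h' => absurd (Nat.lt_trans h h') (lt_irrefl _)⟩
  exact List.Perm.eq_of_pairwise (fun u v _ _ h h' => absurd (Nat.lt_trans h h') (lt_irrefl _)) s1 s2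
    (List.perm_of_nodup_nodup_toFinset_eq h1 h2 hf)

lemma core {n : ℕ} {P Q R S : List (Fin n)} {a b : Fin n}
    (hX : IsCircularPair (P ++ [a], Q ++ [b])) (hY : IsCircularPair (R ++ [a], S ++ [b]))
    (hws1 : WeakSepSets ((P ++ [a]).toFinset ∪ S.toFinset) ((Q ++ [b]).toFinset ∪ R.toFinset))
    (hws2 : WeakSepSets ((R ++ [a]).toFinset ∪ Q.toFinset) ((S ++ [b]).toFinset ∪ P.toFinset)) :
    P = R ∧ Q = S := by
  obtain ⟨hlenX, ndX1, ndX2, dX, cycX⟩ := hX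
  obtain ⟨hlenY, ndY1, ndY2, dY, cycY⟩ := hY
  simp only [List.length_append, List.length_singleton] at hlenX hlenY
  have hlenX' : P.length = Q.length := by omega
  have hlenY' : R.length = S.length := by omega
  simp only [List.nodup_append, List.nodup_cons, List.nodup_nil, List.mem_singleton,
    List.disjoint_singleton] at ndX1 ndX2 ndY1 ndY2
  have nP : P.Nodup := ndX1.1
  have nQ : Q.Nodup := ndX2.1
  have nR : R.Nodup := ndY1.1
  have nS : S.Nodup := ndY2.1
  have naP : a ∉ P := by
    intro h; exact ndX1.2.2 a h a rfl rfl
  have nbQ : b ∉ Q := by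
    intro h; exact ndX2.2.2 b h b rfl rfl
  have naR : a ∉ R := by
    intro h; exact ndY1.2.2 a h a rfl rfl
  have nbS : b ∉ S := by
    intro h; exact ndY2.2.2 b h b rfl rfl
  -- disjointness facts
  have hPQ : ∀ x ∈ P, x ∉ Q := fun x hx hq =>
    dX x (List.mem_append_left _ hx) (List.mem_append_left _ hq)
  have hPb : ∀ x ∈ P, x ≠ b := fun x hx he =>
    dX x (List.mem_append_left _ hx) (by simp [he])
  have haQ : a ∉ Q := fun hq => dX a (by simp) (List.mem_append_left _ hq)
  have hab : a ≠ b := fun he => dX a (by simp) (by simp [he])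
  have hRS : ∀ x ∈ R, x ∉ S := fun x hx hs =>
    dY x (List.mem_append_left _ hx) (List.mem_append_left _ hs)
  have hRb : ∀ x ∈ R, x ≠ b := fun x hx he =>
    dY x (List.mem_append_left _ hx) (by simp [he])
  have haS : a ∉ S := fun hs => dY a (by simp) (List.mem_append_left _ hs)
  -- geometry
  have gX := geomX cycX
  have gY := geomX cycY
  rw [List.pairwise_cons] at gX gY
  obtain ⟨posX, gX⟩ := gX
  obtain ⟨posY, gY⟩ := gY
  rw [List.pairwise_append] at gX gY
  obtain ⟨pwQr, pwPa, crX⟩ := gX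
  obtain ⟨pwSr, pwRa, crY⟩ := gY
  rw [List.pairwise_append] at pwPa pwRa
  obtain ⟨pwP, -, crPa⟩ := pwPa
  obtain ⟨pwR, -, crRa⟩ := pwRa
  -- basic cval facts
  have hPpos : ∀ p ∈ P, cval b b < cval b p := fun p hp =>
    posX p (List.mem_append_right _ (List.mem_append_left _ hp))
  have hQpos : ∀ q ∈ Q, cval b b < cval b q := fun q hq =>
    posX q (List.mem_append_left _ (List.mem_reverse.mpr hq))
  have hRpos : ∀ p ∈ R, cval b b < cval b p := fun p hp =>
    posY p (List.mem_append_right _ (List.mem_append_left _ hp))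
  have hSpos : ∀ q ∈ S, cval b b < cval b q := fun q hq =>
    posY q (List.mem_append_left _ (List.mem_reverse.mpr hq))
  have hPa : ∀ p ∈ P, cval b p < cval b a := fun p hp =>
    crPa p hp a (List.mem_singleton_self a)
  have hRa : ∀ p ∈ R, cval b p < cval b a := fun p hp =>
    crRa p hp a (List.mem_singleton_self a)
  have hQa : ∀ q ∈ Q, cval b q < cval b a := fun q hq =>
    crX q (List.mem_reverse.mpr hq) a (List.mem_append_right _ (List.mem_singleton_self a))
  have hSa : ∀ q ∈ S, cval b q < cval b a := fun q hq =>
    crY q (List.mem_reverse.mpr hq) a (List.mem_append_right _ (List.mem_singleton_self a))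
  -- b not in P, R
  have nbP : b ∉ P := fun h => hPb b h rfl
  have nbR : b ∉ R := fun h => hRb b h rfl
  -- key dichotomy
  have key : (∀ x : Fin n, (x ∈ P ∨ x ∈ S) → (x ∈ Q ∨ x ∈ R)) ∨
      (∀ y : Fin n, (y ∈ Q ∨ y ∈ R) → (y ∈ P ∨ y ∈ S)) := by
    by_contra hcon
    push_neg at hcon
    obtain ⟨⟨x, hxPS, hxQ, hxR⟩, ⟨y, hyQR, hyP, hyS⟩⟩ := hcon
    have hx0 : cval b b < cval b x := by
      rcases hxPS with h | h
      · exact hPpos x h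
      · exact hSpos x h
    have hxa : cval b x < cval b a := by
      rcases hxPS with h | h
      · exact hPa x h
      · exact hSa x h
    have hy0 : cval b b < cval b y := by
      rcases hyQR with h | h
      · exact hQpos y h
      · exact hRpos y h
    have hya : cval b y < cval b a := by
      rcases hyQR with h | h
      · exact hQa y h
      · exact hRa y h
    have hxb : x ≠ b := fun he => by rw [he] at hx0; exact lt_irrefl _ hx0
    have hyb : y ≠ b := fun he => by rw [he] at hy0; exact lt_irrefl _ hy0
    have hxa' : x ≠ a := fun he => by rw [he] at hxa; exact lt_irrefl _ hxa
    have hya' : y ≠ a := fun he => by rw [he] at hya; exact lt_irrefl _ hya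
    have hxy : x ≠ y := by
      rintro rfl
      rcases hyQR with h | h
      · exact hxQ h
      · exact hxR h
    rcases lt_trichotomy (cval b x) (cval b y) with h | h | h
    · refine ws_contra hws1 ?_ ?_ ?_ ?_ ?_ ?_ ?_ ?_ hx0 h hya
      · simp only [Finset.mem_union, List.mem_toFinset, List.mem_append, List.mem_singleton]
        rcases hxPS with hh | hh
        · exact Or.inl (Or.inl hh)
        · exact Or.inr hh
      · simp only [Finset.mem_union, List.mem_toFinset, List.mem_append, List.mem_singleton]
        push_neg
        exact ⟨⟨hxQ, hxb⟩, hxR⟩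
      · simp only [Finset.mem_union, List.mem_toFinset, List.mem_append, List.mem_singleton]
        rcases hyQR with hh | hh
        · exact Or.inl (Or.inl hh)
        · exact Or.inr hh
      · simp only [Finset.mem_union, List.mem_toFinset, List.mem_append, List.mem_singleton]
        push_neg
        exact ⟨⟨hyP, hya'⟩, hyS⟩
      · simp
      · simp only [Finset.mem_union, List.mem_toFinset, List.mem_append, List.mem_singleton]
        push_neg
        exact ⟨⟨haQ, hab⟩, naR⟩
      · simp
      · simp only [Finset.mem_union, List.mem_toFinset, List.mem_append, List.mem_singleton]
        push_neg
        exact ⟨⟨nbP, fun he => hab he.symm⟩, nbS⟩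
    · exact hxy (cval_inj h)
    · refine ws_contra hws2 ?_ ?_ ?_ ?_ ?_ ?_ ?_ ?_ hy0 h hxa
      · simp only [Finset.mem_union, List.mem_toFinset, List.mem_append, List.mem_singleton]
        rcases hyQR with hh | hh
        · exact Or.inr hh
        · exact Or.inl (Or.inl hh)
      · simp only [Finset.mem_union, List.mem_toFinset, List.mem_append, List.mem_singleton]
        push_neg
        exact ⟨⟨hyS, hyb⟩, hyP⟩
      · simp only [Finset.mem_union, List.mem_toFinset, List.mem_append, List.mem_singleton]
        rcases hxPS with hh | hh
        · exact Or.inr hh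
        · exact Or.inl (Or.inl hh)
      · simp only [Finset.mem_union, List.mem_toFinset, List.mem_append, List.mem_singleton]
        push_neg
        exact ⟨⟨hxR, hxa'⟩, hxQ⟩
      · simp
      · simp only [Finset.mem_union, List.mem_toFinset, List.mem_append, List.mem_singleton]
        push_neg
        exact ⟨⟨haS, hab⟩, naP⟩
      · simp
      · simp only [Finset.mem_union, List.mem_toFinset, List.mem_append, List.mem_singleton]
        push_neg
        exact ⟨⟨nbR, fun he => hab he.symm⟩, nbQ⟩
  -- from the dichotomy to finset equalities
  have lenP : P.toFinset.card = P.length := List.toFinset_card_of_nodup nP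
  have lenQ : Q.toFinset.card = Q.length := List.toFinset_card_of_nodup nQ
  have lenR : R.toFinset.card = R.length := List.toFinset_card_of_nodup nR
  have lenS : S.toFinset.card = S.length := List.toFinset_card_of_nodup nS
  have main : P.toFinset = R.toFinset ∧ Q.toFinset = S.toFinset := by
    rcases key with key | key
    · have hPR : P.toFinset ⊆ R.toFinset := by
        intro x hx
        rw [List.mem_toFinset] at *
        exact (key x (Or.inl hx)).resolve_left (hPQ x hx)
      have hSQ : S.toFinset ⊆ Q.toFinset := by
        intro x hx
        rw [List.mem_toFinset] at *
        exact (key x (Or.inr hx)).resolve_right (fun h => hRS x h hx)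
      have c1 := Finset.card_le_card hPR
      have c2 := Finset.card_le_card hSQ
      constructor
      · exact Finset.eq_of_subset_of_card_le hPR (by omega)
      · exact (Finset.eq_of_subset_of_card_le hSQ (by omega)).symm
    · have hQS : Q.toFinset ⊆ S.toFinset := by
        intro x hx
        rw [List.mem_toFinset] at *
        exact (key x (Or.inl hx)).resolve_left (fun h => hPQ x h hx)
      have hRP : R.toFinset ⊆ P.toFinset := by
        intro x hx
        rw [List.mem_toFinset] at *
        exact (key x (Or.inr hx)).resolve_right (fun h => hRS x hx h)
      have c1 := Finset.card_le_card hQS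
      have c2 := Finset.card_le_card hRP
      constructor
      · exact (Finset.eq_of_subset_of_card_le hRP (by omega)).symm
      · exact Finset.eq_of_subset_of_card_le hQS (by omega)
  constructor
  · exact list_eq_of_cb b nP nR main.1 pwP pwR
  · have := list_eq_of_cb b (List.nodup_reverse.mpr nQ) (List.nodup_reverse.mpr nS)
      (by simp [main.2]) pwQr pwSr
    exact List.reverse_injective this

lemma onArc_of_cb {n : ℕ} {a b x : Fin n} (h : cb a x b) : OnArc a b x := le_of_lt h

lemma onArc_self_left {n : ℕ} (a b : Fin n) : OnArc a b a := by
  show cval a a ≤ cval a b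
  unfold cval
  simp [Nat.add_sub_cancel_left]

lemma onArc_self_right {n : ℕ} (a b : Fin n) : OnArc a b b := le_refl _

lemma posB {n : ℕ} {pq : PrePair n} {a b : Fin n} (hcp : IsCircularPair pq)
    (hconn : Sym2.mk a b ∈ connFinset pq)
    (hE : ∀ e ∈ connFinset pq, e ≠ Sym2.mk a b → ¬ ∀ x ∈ e, OnArc a b x) :
    ∃ P Q : List (Fin n),
      (pq = (P ++ [a], Q ++ [b]) ∧ Jop a b pq = (P, Q)) ∨
      (pq = cpFlip (P ++ [a], Q ++ [b]) ∧ Jop a b pq = cpFlip (P, Q)) := by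
  obtain ⟨L1, L2⟩ := pq
  obtain ⟨hlen, nd1, nd2, disj, hcyc⟩ := hcp
  simp only at hlen nd1 nd2 disj hcyc ⊢
  set k := L1.length with hk
  have hzlen : (L1.zip L2).length = k := by rw [List.length_zip, ← hlen, min_self]
  have hconn' : ∃ uv ∈ L1.zip L2, Sym2.mk uv.1 uv.2 = Sym2.mk a b := by
    simpa [connFinset, List.mem_toFinset, List.mem_map] using hconn
  obtain ⟨uv, huv, heq⟩ := hconn'
  obtain ⟨j0, hj0len, hj0⟩ := List.mem_iff_getElem.mp huv
  rw [hzlen] at hj0len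
  have hb1 : j0 < L1.length := by omega
  have hb2 : j0 < L2.length := by omega
  have hj0' : uv = (L1[j0], L2[j0]) := by rw [← hj0]; exact List.getElem_zip
  simp only [hj0'] at heq
  rw [Sym2.eq_iff] at heq
  have hane : a ≠ b := by
    intro he
    rcases heq with ⟨h1, h2⟩ | ⟨h1, h2⟩
    · exact disj L1[j0] (List.getElem_mem hb1) (by rw [h1, he, ← h2]; exact List.getElem_mem hb2)
    · exact disj L1[j0] (List.getElem_mem hb1) (by rw [h1, ← he, ← h2]; exact List.getElem_mem hb2)
  have huniq : ∀ j (hj : j < L1.length) (hj2 : j < L2.length),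
      Sym2.mk L1[j] L2[j] = Sym2.mk a b → j = j0 := by
    intro j hj hj2 he
    rw [Sym2.eq_iff] at he
    rcases heq with ⟨h1, h2⟩ | ⟨h1, h2⟩ <;> rcases he with ⟨e1, e2⟩ | ⟨e1, e2⟩
    · exact nd1.getElem_inj_iff.mp (e1.trans h1.symm)
    · exact absurd (show a ∈ L2 by rw [← e2]; exact List.getElem_mem hj2)
        (fun hc => disj a (by rw [← h1]; exact List.getElem_mem hb1) hc)
    · exact absurd (show b ∈ L2 by rw [← e2]; exact List.getElem_mem hj2)
        (fun hc => disj b (by rw [← h1]; exact List.getElem_mem hb1) hc)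
    · exact nd1.getElem_inj_iff.mp (e1.trans h1.symm)
  rcases heq with ⟨hA1, hA2⟩ | ⟨hB1, hB2⟩
  · -- CASE A : L1[j0] = a, L2[j0] = b ; claim j0 = k - 1
    have hj0last : j0 = k - 1 := by
      by_contra hne
      have hlt : j0 + 1 < k := by omega
      set A1 := L1.take j0 with hA1d
      set A2 := L1.drop (j0+1) with hA2d
      set B1 := L2.reverse.take (k-1-j0) with hB1d
      set B2 := L2.reverse.drop (k-j0) with hB2d
      have hL1d : L1 = A1 ++ a :: A2 := by
        rw [hA1d, hA2d, ← hA1, ← List.drop_eq_getElem_cons hb1]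
        exact (List.take_append_drop j0 L1).symm
      have hrevlen : L2.reverse.length = k := by simp [← hlen]
      have hbidx : k - 1 - j0 < L2.reverse.length := by omega
      have hrevb : L2.reverse[k-1-j0]'hbidx = b := by
        rw [List.getElem_reverse, ← hA2]
        congr 1
        omega
      have e21 : k - j0 = (k - 1 - j0) + 1 := by omega
      have hL2d : L2.reverse = B1 ++ b :: B2 := by
        rw [hB1d, hB2d, e21, ← hrevb, ← List.drop_eq_getElem_cons hbidx]
        exact (List.take_append_drop _ _).symm
      have hA1len : A1.length = j0 := by
        rw [hA1d, List.length_take]; omega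
      have hrot : (L1 ++ L2.reverse).rotate j0 = a :: ((A2 ++ (B1 ++ b :: B2)) ++ A1) := by
        rw [List.rotate_eq_drop_append_take (by simp only [List.length_append]; omega)]
        rw [hL1d, hL2d]
        rw [show (A1 ++ a :: A2) ++ (B1 ++ b :: B2)
            = A1 ++ (a :: (A2 ++ (B1 ++ b :: B2))) by simp]
        rw [List.drop_left' hA1len, List.take_left' hA1len]
        simp
      have hpw := rot_cb hcyc j0 hrot
      rw [hrot, List.pairwise_cons] at hpw
      have hpw2 := hpw.2
      rw [List.pairwise_append] at hpw2
      have hpw3 := hpw2.1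
      rw [List.pairwise_append] at hpw3
      obtain ⟨-, pwB, crossAB⟩ := hpw3
      rw [List.pairwise_append] at pwB
      obtain ⟨-, -, crossB⟩ := pwB
      have hp'idx : j0 + 1 < L1.length := by omega
      have hq'idx : j0 + 1 < L2.length := by omega
      have hp'mem : L1[j0+1] ∈ A2 := by
        rw [hA2d, List.drop_eq_getElem_cons hp'idx]
        exact List.mem_cons_self
      have hq'mem : L2[j0+1] ∈ B1 := by
        rw [hB1d, List.mem_iff_getElem]
        refine ⟨k - 2 - j0, by rw [List.length_take]; omega, ?_⟩
        rw [List.getElem_take, List.getElem_reverse]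
        congr 1
        omega
      have hcb_p : cb a L1[j0+1] b :=
        crossAB _ hp'mem b (List.mem_append_right _ (List.mem_cons_self))
      have hcb_q : cb a L2[j0+1] b := crossB _ hq'mem b (List.mem_cons_self)
      have hzmem : ((L1[j0+1], L2[j0+1]) : Fin n × Fin n) ∈ L1.zip L2 := by
        rw [List.mem_iff_getElem]
        exact ⟨j0+1, by omega, List.getElem_zip⟩
      have hemem : Sym2.mk L1[j0+1] L2[j0+1] ∈ connFinset (L1, L2) := by
        simp only [connFinset, List.mem_toFinset, List.mem_map]
        exact ⟨(L1[j0+1], L2[j0+1]), hzmem, rfl⟩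
      have hene : Sym2.mk L1[j0+1] L2[j0+1] ≠ Sym2.mk a b := by
        intro he
        have := huniq (j0+1) hp'idx hq'idx he
        omega
      refine hE _ hemem hene ?_
      intro x hx
      rcases Sym2.mem_iff.mp hx with rfl | rfl
      · exact onArc_of_cb hcb_p
      · exact onArc_of_cb hcb_q
    -- conclusion of case A
    have hne1 : L1 ≠ [] := by
      intro h
      rw [h] at hk
      simp at hk
      omega
    have hne2 : L2 ≠ [] := by
      intro h
      rw [h] at hlen
      simp at hlen
      omega
    have hidx1 : L1.length - 1 = j0 := by omega
    have hidx2 : L2.length - 1 = j0 := by omega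
    have hL1e : L1 = L1.dropLast ++ [a] := by
      conv_lhs => rw [← List.dropLast_append_getLast hne1]
      rw [List.getLast_eq_getElem]
      simp only [hidx1, hA1]
    have hL2e : L2 = L2.dropLast ++ [b] := by
      conv_lhs => rw [← List.dropLast_append_getLast hne2]
      rw [List.getLast_eq_getElem]
      simp only [hidx2, hA2]
    refine ⟨L1.dropLast, L2.dropLast, Or.inl ⟨?_, ?_⟩⟩
    · rw [Prod.mk.injEq]
      exact ⟨hL1e, hL2e⟩
    · -- Jop computation
      have hkz : k - 1 < (L1.zip L2).length := by omega
      have hzdec : L1.zip L2 = (L1.zip L2).take (k-1) ++ [(a, b)] := by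
        have h1 : (L1.zip L2).drop (k-1) = [(a, b)] := by
          rw [List.drop_eq_getElem_cons hkz]
          have hd : (L1.zip L2).drop ((k-1)+1) = [] :=
            List.drop_eq_nil_of_le (by omega)
          rw [hd, List.getElem_zip]
          simp only [show k - 1 = j0 from by omega]
          rw [hA1, hA2]
        rw [← h1, List.take_append_drop]
      have hfilter : ((L1.zip L2).filter fun x => decide (Sym2.mk x.1 x.2 ≠ Sym2.mk a b))
          = (L1.zip L2).take (k-1) := by
        conv_lhs => rw [hzdec]
        rw [List.filter_append]
        have h2 : List.filter (fun x => decide (Sym2.mk x.1 x.2 ≠ Sym2.mk a b)) [(a, b)] = [] := by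
          simp
        rw [h2, List.append_nil, List.filter_eq_self]
        intro x hx
        obtain ⟨i, hi, hxe⟩ := List.mem_iff_getElem.mp hx
        have hi' : i < k - 1 := by
          rw [List.length_take] at hi
          omega
        rw [List.getElem_take] at hxe
        subst hxe
        rw [List.getElem_zip]
        simp only [ne_eq, decide_eq_true_eq]
        intro he
        have := huniq i (by omega) (by omega) he
        omega
      show (_, _) = (_, _)
      rw [Prod.mk.injEq]
      constructor
      · show ((L1.zip L2).filter _).map Prod.fst = _
        rw [hfilter, List.map_take, List.map_fst_zip (le_of_eq hlen),
          ← List.dropLast_eq_take]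
      · show ((L1.zip L2).filter _).map Prod.snd = _
        rw [hfilter, List.map_take, List.map_snd_zip (ge_of_eq hlen),
          show k - 1 = L2.length - 1 by omega, ← List.dropLast_eq_take]
  · -- CASE B : L1[j0] = b, L2[j0] = a ; claim j0 = 0
    have hj0first : j0 = 0 := by
      by_contra hne
      have hpos : 1 ≤ j0 := by omega
      set C1 := L1.take j0 with hC1d
      set C2 := L1.drop (j0+1) with hC2d
      set D1 := L2.reverse.take (k-1-j0) with hD1d
      set D2 := L2.reverse.drop (k-j0) with hD2d
      have hL1d : L1 = C1 ++ b :: C2 := by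
        rw [hC1d, hC2d, ← hB1, ← List.drop_eq_getElem_cons hb1]
        exact (List.take_append_drop j0 L1).symm
      have hrevlen : L2.reverse.length = k := by simp [← hlen]
      have haidx : k - 1 - j0 < L2.reverse.length := by omega
      have hreva : L2.reverse[k-1-j0]'haidx = a := by
        rw [List.getElem_reverse, ← hB2]
        congr 1
        omega
      have e21 : k - j0 = (k - 1 - j0) + 1 := by omega
      have hL2d : L2.reverse = D1 ++ a :: D2 := by
        rw [hD1d, hD2d, e21, ← hreva, ← List.drop_eq_getElem_cons haidx]
        exact (List.take_append_drop _ _).symm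
      have hleft_len : ((C1 ++ b :: C2) ++ D1).length = k + (k - 1 - j0) := by
        rw [List.length_append, ← hL1d, hD1d, List.length_take]
        omega
      have hrot : (L1 ++ L2.reverse).rotate (k + (k - 1 - j0))
          = a :: (D2 ++ ((C1 ++ b :: C2) ++ D1)) := by
        rw [List.rotate_eq_drop_append_take
          (by simp only [List.length_append]; omega)]
        rw [hL1d, hL2d]
        rw [show (C1 ++ b :: C2) ++ (D1 ++ a :: D2)
            = ((C1 ++ b :: C2) ++ D1) ++ (a :: D2) by simp]
        rw [List.drop_left' hleft_len, List.take_left' hleft_len]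
        simp
      have hpw := rot_cb hcyc (k + (k - 1 - j0)) hrot
      rw [hrot, List.pairwise_cons] at hpw
      have hpw2 := hpw.2
      rw [List.pairwise_append] at hpw2
      obtain ⟨-, pwRest, crossD⟩ := hpw2
      rw [List.pairwise_append] at pwRest
      have pwC := pwRest.1
      rw [List.pairwise_append] at pwC
      obtain ⟨-, -, crossC⟩ := pwC
      have hp''idx : j0 - 1 < L1.length := by omega
      have hq''idx : j0 - 1 < L2.length := by omega
      have hq''rev : k - j0 < L2.reverse.length := by omega
      have hp''mem : L1[j0-1] ∈ C1 := by
        rw [hC1d, List.mem_iff_getElem]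
        refine ⟨j0 - 1, by rw [List.length_take]; omega, ?_⟩
        rw [List.getElem_take]
      have hq''mem : L2[j0-1] ∈ D2 := by
        rw [hD2d, List.drop_eq_getElem_cons hq''rev]
        have : L2.reverse[k-j0]'hq''rev = L2[j0-1] := by
          rw [List.getElem_reverse]
          congr 1
          omega
        rw [this]
        exact List.mem_cons_self
      have hcb_p : cb a L1[j0-1] b :=
        crossC _ hp''mem b (List.mem_cons_self)
      have hcb_q : cb a L2[j0-1] b :=
        crossD _ hq''mem b
          (List.mem_append_left _ (List.mem_append_right _ (List.mem_cons_self)))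
      have hzmem : ((L1[j0-1], L2[j0-1]) : Fin n × Fin n) ∈ L1.zip L2 := by
        rw [List.mem_iff_getElem]
        exact ⟨j0-1, by omega, List.getElem_zip⟩
      have hemem : Sym2.mk L1[j0-1] L2[j0-1] ∈ connFinset (L1, L2) := by
        simp only [connFinset, List.mem_toFinset, List.mem_map]
        exact ⟨(L1[j0-1], L2[j0-1]), hzmem, rfl⟩
      have hene : Sym2.mk L1[j0-1] L2[j0-1] ≠ Sym2.mk a b := by
        intro he
        have := huniq (j0-1) hp''idx hq''idx he
        omega
      refine hE _ hemem hene ?_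
      intro x hx
      rcases Sym2.mem_iff.mp hx with rfl | rfl
      · exact onArc_of_cb hcb_p
      · exact onArc_of_cb hcb_q
    -- conclusion of case B
    subst hj0first
    have hL1e : L1 = b :: L1.tail := by
      have h0 := List.drop_eq_getElem_cons hb1
      rw [List.drop_zero, List.drop_one, hB1] at h0
      exact h0
    have hL2e : L2 = a :: L2.tail := by
      have h0 := List.drop_eq_getElem_cons hb2
      rw [List.drop_zero, List.drop_one, hB2] at h0
      exact h0
    refine ⟨L2.tail.reverse, L1.tail.reverse, Or.inr ⟨?_, ?_⟩⟩
    · simp only [cpFlip, List.reverse_append, List.reverse_reverse, List.reverse_cons,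
        List.reverse_nil, List.nil_append, List.singleton_append]
      rw [Prod.mk.injEq]
      exact ⟨hL1e, hL2e⟩
    · have hzdec : L1.zip L2 = (b, a) :: (L1.tail.zip L2.tail) := by
        conv_lhs => rw [hL1e, hL2e]
        rw [List.zip_cons_cons]
      have hfilter : ((L1.zip L2).filter fun x => decide (Sym2.mk x.1 x.2 ≠ Sym2.mk a b))
          = L1.tail.zip L2.tail := by
        rw [hzdec]
        rw [List.filter_cons_of_neg (by simp [Sym2.eq_swap.symm])]
        rw [List.filter_eq_self]
        intro x hx
        have hx' : x ∈ L1.zip L2 := by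
          rw [hzdec]; exact List.mem_cons_of_mem _ hx
        obtain ⟨j, hj, hxe⟩ := List.mem_iff_getElem.mp hx'
        simp only [ne_eq, decide_eq_true_eq]
        intro he
        have hj1 : j < L1.length := by omega
        have hj2 : j < L2.length := by omega
        have hxe' : x = (L1[j], L2[j]) := by rw [← hxe]; exact List.getElem_zip
        have hj00 : j = 0 := huniq j hj1 hj2 (by rw [hxe'] at he; exact he)
        subst hj00
        have hxba : x = (b, a) := by rw [hxe', hB1, hB2]
        rw [hxba] at hx
        have hbtail : b ∈ L1.tail := (List.of_mem_zip hx).1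
        have hnd := nd1
        rw [hL1e, List.nodup_cons] at hnd
        exact hnd.1 hbtail
      have htlen : L1.tail.length ≤ L2.tail.length := by
        simp only [List.length_tail]
        omega
      have htlen2 : L2.tail.length ≤ L1.tail.length := by
        simp only [List.length_tail]
        omega
      show (_, _) = _
      simp only [cpFlip, List.reverse_reverse]
      rw [Prod.mk.injEq]
      constructor
      · show ((L1.zip L2).filter _).map Prod.fst = _
        rw [hfilter, List.map_fst_zip htlen]
      · show ((L1.zip L2).filter _).map Prod.snd = _
        rw [hfilter, List.map_snd_zip htlen2]


lemma memId_flip {n : ℕ} {C : Set (PrePair n)} {pq : PrePair n}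
    (h : MemId (cpFlip pq) C) : MemId pq C := by
  rcases h with h | h
  · exact Or.inr h
  · rw [cpFlip_cpFlip] at h
    exact Or.inl h

lemma wsBoth {n : ℕ} {C : Set (PrePair n)} (hws : C.Pairwise WeakSepCP) {u v : PrePair n}
    (hu : MemId u C) (hv : MemId v C)
    (h1 : u.1 ≠ v.1) (h2 : u.1 ≠ v.2.reverse) (h3 : u.2.reverse ≠ v.1)
    (h4 : u.2.reverse ≠ v.2.reverse) :
    WeakSepSets (u.1.toFinset ∪ v.2.toFinset) (u.2.toFinset ∪ v.1.toFinset) := by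
  rcases hu with hu | hu <;> rcases hv with hv | hv
  · have hne : u ≠ v := fun he => h1 (congrArg Prod.fst he)
    exact (hws hu hv hne).2
  · have hne : u ≠ cpFlip v := fun he => h2 (congrArg Prod.fst he)
    have hc := (hws hu hv hne).1
    simpa [cpFlip, List.toFinset_reverse] using hc
  · have hne : cpFlip u ≠ v := fun he => h3 (congrArg Prod.fst he)
    have hc := (hws hu hv hne).1
    simp only [cpFlip, List.toFinset_reverse] at hc
    exact hc.symm
  · have hne : cpFlip u ≠ cpFlip v := fun he => h4 (congrArg Prod.fst he)
    have hc := (hws hu hv hne).2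
    simp only [cpFlip, List.toFinset_reverse] at hc
    exact hc.symm

lemma cp_notmem {n : ℕ} {P Q : List (Fin n)} {a b : Fin n}
    (h : IsCircularPair (P ++ [a], Q ++ [b])) :
    a ∉ P ∧ a ∉ Q ∧ b ∉ P ∧ b ∉ Q ∧ a ≠ b := by
  obtain ⟨-, nd1, nd2, disj, -⟩ := h
  simp only at nd1 nd2 disj
  rw [List.nodup_append] at nd1 nd2
  refine ⟨?_, ?_, ?_, ?_, ?_⟩
  · intro hh
    exact nd1.2.2 a hh a (List.mem_singleton_self a) rfl
  · intro hq
    exact disj a (by simp) (List.mem_append_left _ hq)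
  · intro hp
    exact disj b (List.mem_append_left _ hp) (by simp)
  · intro hq
    exact nd2.2.2 b hq b (List.mem_singleton_self b) rfl
  · intro he
    exact disj a (by simp) (by simp [he])


theorem statement_18 (n : ℕ) (C : Set (PrePair n))
    (hC : ∀ pq ∈ C, IsCircularPair pq ∧ pq.1 ≠ [])
    (hws : C.Pairwise WeakSepCP) (a b : Fin n)
    (hab : Sym2.mk a b ∈ ⋃ pq ∈ C, (connFinset pq : Set (Sym2 (Fin n))))
    (harc : ∀ e ∈ ⋃ pq ∈ C, (connFinset pq : Set (Sym2 (Fin n))),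
      e ≠ Sym2.mk a b → ¬ ∀ x ∈ e, OnArc a b x) :
    ∀ pq ∈ C, ∀ rs ∈ C,
      Sym2.mk a b ∈ connFinset pq → MemId (Jop a b pq) C →
      Sym2.mk a b ∈ connFinset rs → MemId (Jop a b rs) C →
      pq = rs ∨ pq = cpFlip rs := by
  intro pq hpq rs hrs hcpq hJpq hcrs hJrs
  have hEpq : ∀ e ∈ connFinset pq, e ≠ Sym2.mk a b → ¬ ∀ x ∈ e, OnArc a b x :=
    fun e he => harc e (Set.mem_biUnion hpq (Finset.mem_coe.mpr he))
  have hErs : ∀ e ∈ connFinset rs, e ≠ Sym2.mk a b → ¬ ∀ x ∈ e, OnArc a b x :=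
    fun e he => harc e (Set.mem_biUnion hrs (Finset.mem_coe.mpr he))
  obtain ⟨P, Q, hcase⟩ := posB (hC pq hpq).1 hcpq hEpq
  obtain ⟨R, S, hcaseY⟩ := posB (hC rs hrs).1 hcrs hErs
  have hXmem : MemId (P ++ [a], Q ++ [b]) C := by
    rcases hcase with ⟨h, -⟩ | ⟨h, -⟩
    · exact Or.inl (h ▸ hpq)
    · exact Or.inr (by rw [← h]; exact hpq)
  have hYmem : MemId (R ++ [a], S ++ [b]) C := by
    rcases hcaseY with ⟨h, -⟩ | ⟨h, -⟩
    · exact Or.inl (h ▸ hrs)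
    · exact Or.inr (by rw [← h]; exact hrs)
  have hPQmem : MemId (P, Q) C := by
    rcases hcase with ⟨-, h⟩ | ⟨-, h⟩
    · exact h ▸ hJpq
    · exact memId_flip (h ▸ hJpq)
  have hRSmem : MemId (R, S) C := by
    rcases hcaseY with ⟨-, h⟩ | ⟨-, h⟩
    · exact h ▸ hJrs
    · exact memId_flip (h ▸ hJrs)
  have hXcp : IsCircularPair (P ++ [a], Q ++ [b]) := by
    rcases hcase with ⟨h, -⟩ | ⟨h, -⟩
    · exact h ▸ (hC pq hpq).1
    · have h0 := (hC pq hpq).1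
      rw [h] at h0
      have h1 := h0.flip
      rwa [cpFlip_cpFlip] at h1
  have hYcp : IsCircularPair (R ++ [a], S ++ [b]) := by
    rcases hcaseY with ⟨h, -⟩ | ⟨h, -⟩
    · exact h ▸ (hC rs hrs).1
    · have h0 := (hC rs hrs).1
      rw [h] at h0
      have h1 := h0.flip
      rwa [cpFlip_cpFlip] at h1
  obtain ⟨naP, naQ, nbP, nbQ, hne⟩ := cp_notmem hXcp
  obtain ⟨naR, naS, nbR, nbS, -⟩ := cp_notmem hYcp
  have hws1 := wsBoth hws hXmem hRSmem
    (by intro h; have h' : P ++ [a] = R := h; apply naR; rw [← h']; simp)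
    (by intro h; have h' : P ++ [a] = S.reverse := h; apply naS
        rw [← List.mem_reverse, ← h']; simp)
    (by intro h; have h' : (Q ++ [b]).reverse = R := h; apply nbR; rw [← h']; simp)
    (by intro h; have h' : (Q ++ [b]).reverse = S.reverse := h; apply nbS
        rw [← List.mem_reverse, ← h']; simp)
  have hws2 := wsBoth hws hYmem hPQmem
    (by intro h; have h' : R ++ [a] = P := h; apply naP; rw [← h']; simp)
    (by intro h; have h' : R ++ [a] = Q.reverse := h; apply naQ
        rw [← List.mem_reverse, ← h']; simp)
    (by intro h; have h' : (S ++ [b]).reverse = P := h; apply nbP; rw [← h']; simp)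
    (by intro h; have h' : (S ++ [b]).reverse = Q.reverse := h; apply nbQ
        rw [← List.mem_reverse, ← h']; simp)
  obtain ⟨hPR, hQS⟩ := core hXcp hYcp hws1 hws2
  subst hPR
  subst hQS
  rcases hcase with ⟨h1, -⟩ | ⟨h1, -⟩ <;> rcases hcaseY with ⟨h2, -⟩ | ⟨h2, -⟩
  · left
    rw [h1, h2]
  · right
    rw [h1, h2, cpFlip_cpFlip]
  · right
    rw [h1, h2]
  · left
    rw [h1, h2]
end CircularPlanar
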